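/- arXiv:1810.10846 — 7 statements merged into one kernel-verified Lean document; each statement's English description precedes it below -/
import Mathlib

section
/- For any finite nonempty set A of positive real numbers, |A/A + A| ≫ |A|^{3/2}. -/
/-!
Sort `A` as `a₀ < ⋯ < aₘ` and put `S = A/A + A`. For a gap `i` and `(t, b) ∈ A × A` the
points `t / aᵢ₊₁ + b < t / aᵢ + b` lie in `S`, and for fixed `i` they determine `(t, b)`.
Let `rᵢ(t, b)` be the number of points of `S` in the half-open interval between them.

For fixed `(t, b)` these intervals are disjoint as `i` varies, so `∑ᵢ rᵢ(t, b) ≤ |S|`.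
For fixed `i`, the `k` pairs sharing a left endpoint have distinct right endpoints, so their counts
sum to at least `k² / 2`; Cauchy–Schwarz over the at most `|S|` left endpoints then gives
`∑_{t,b} rᵢ(t, b) ≥ |A|⁴ / (2|S|)`. Summing over the `|A| - 1` gaps,
`(|A| - 1) |A|² ≤ 2 |S|²`.
-/

open Finset

section IntervalCounting

variable {α : Type*} [LinearOrder α]

theorem two_mul_sum_card_filter_le_eq_card_mul_card_add_one (T : Finset α) :
    2 * ∑ y ∈ T, #{u ∈ T | u ≤ y} = #T * (#T + 1) := by
  induction T using Finset.induction_on_max with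
  | empty => simp
  | insert a T hlt ih =>
    have ha : a ∉ T := fun h => lt_irrefl a (hlt a h)
    have htop : #{u ∈ insert a T | u ≤ a} = #T + 1 := by
      rw [filter_true_of_mem fun u hu => ?_, card_insert_of_notMem ha]
      rcases mem_insert.1 hu with rfl | hu
      exacts [le_rfl, (hlt u hu).le]
    have hrest : ∀ y ∈ T, #{u ∈ insert a T | u ≤ y} = #{u ∈ T | u ≤ y} := fun y hy => by
      rw [filter_insert, if_neg (not_le.2 (hlt y hy))]
    rw [sum_insert ha, card_insert_of_notMem ha, htop, sum_congr rfl hrest, mul_add, ih]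
    ring

theorem sq_card_le_two_mul_card_mul_sum_card_Ioc (S : Finset α) (P : Finset (α × α))
    (hP : ∀ p ∈ P, p.1 ∈ S ∧ p.2 ∈ S ∧ p.1 < p.2) :
    #P ^ 2 ≤ 2 * #S * ∑ p ∈ P, #{u ∈ S | p.1 < u ∧ u ≤ p.2} := by
  set r : α × α → ℕ := fun p => #{u ∈ S | p.1 < u ∧ u ≤ p.2}
  have hfiber (x : α) : #{p ∈ P | p.1 = x} ^ 2 ≤ 2 * ∑ p ∈ P with p.1 = x, r p := by
    set F : Finset (α × α) := {p ∈ P | p.1 = x}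
    set T := F.image Prod.snd
    have hinj : Set.InjOn (Prod.snd : α × α → α) F := by
      intro p hp q hq h
      simp only [F, mem_coe, mem_filter] at hp hq
      exact Prod.ext (hp.2.trans hq.2.symm) h
    have hT : ∀ y ∈ T, {u ∈ T | u ≤ y} ⊆ {u ∈ S | x < u ∧ u ≤ y} := by
      intro y _ u hu
      obtain ⟨huT, huy⟩ := mem_filter.1 hu
      obtain ⟨p, hp, rfl⟩ := mem_image.1 huT
      obtain ⟨hpP, rfl⟩ := mem_filter.1 hp
      exact mem_filter.2 ⟨(hP p hpP).2.1, (hP p hpP).2.2, huy⟩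
    calc #{p ∈ P | p.1 = x} ^ 2 = #T ^ 2 := by rw [card_image_of_injOn hinj]
      _ ≤ #T * (#T + 1) := by rw [sq]; exact Nat.mul_le_mul_left _ (Nat.le_succ _)
      _ = 2 * ∑ y ∈ T, #{u ∈ T | u ≤ y} :=
        (two_mul_sum_card_filter_le_eq_card_mul_card_add_one T).symm
      _ ≤ 2 * ∑ y ∈ T, #{u ∈ S | x < u ∧ u ≤ y} := by
        gcongr with y hy
        exact hT y hy
      _ = 2 * ∑ p ∈ P with p.1 = x, r p := by
        rw [sum_image hinj]
        refine congrArg _ (sum_congr rfl fun p hp => ?_)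
        rw [← (mem_filter.1 hp).2]
  calc #P ^ 2 = (∑ x ∈ S, #{p ∈ P | p.1 = x}) ^ 2 := by
        rw [card_eq_sum_card_fiberwise fun p hp => (hP p hp).1]
    _ ≤ #S * ∑ x ∈ S, #{p ∈ P | p.1 = x} ^ 2 := sq_sum_le_card_mul_sum_sq
    _ ≤ #S * ∑ x ∈ S, 2 * ∑ p ∈ P with p.1 = x, r p := by gcongr with x; exact hfiber x
    _ = 2 * #S * ∑ p ∈ P, r p := by
        rw [← mul_sum, sum_fiberwise_of_maps_to fun p hp => (hP p hp).1]
        ring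

theorem sq_card_le_two_mul_card_mul_sum_card_Ioc_of_injOn {ι : Type*} (S : Finset α)
    (D : Finset ι) (f : ι → α × α) (hf : Set.InjOn f D)
    (hfS : ∀ z ∈ D, (f z).1 ∈ S ∧ (f z).2 ∈ S ∧ (f z).1 < (f z).2) :
    #D ^ 2 ≤ 2 * #S * ∑ z ∈ D, #{u ∈ S | (f z).1 < u ∧ u ≤ (f z).2} := by
  have h := sq_card_le_two_mul_card_mul_sum_card_Ioc S (D.image f) (by simpa using hfS)
  rwa [card_image_of_injOn hf, sum_image hf] at h

theorem sum_card_Ioc_le_card_of_antitone (S : Finset α) {m : ℕ} {g : Fin (m + 1) → α}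
    (hg : Antitone g) :
    ∑ i : Fin m, #{u ∈ S | g i.succ < u ∧ u ≤ g i.castSucc} ≤ #S := by
  set I : Fin m → Finset α := fun i => {u ∈ S | g i.succ < u ∧ u ≤ g i.castSucc}
  have hdisj {i j : Fin m} (h : i < j) : Disjoint (I i) (I j) :=
    disjoint_filter.2 fun u _ hi hj =>
      lt_irrefl _ (hi.1.trans_le (hj.2.trans (hg (Fin.succ_le_castSucc_iff.2 h))))
  calc ∑ i, #(I i) = #(univ.biUnion I) :=
        (card_biUnion fun i _ j _ hij =>
          (lt_or_gt_of_ne hij).elim hdisj fun h => (hdisj h).symm).symm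
    _ ≤ #S := card_le_card (biUnion_subset.2 fun i _ => filter_subset _ _)

end IntervalCounting

theorem injective_div_add_div_add {K : Type*} [Field K] {c d : K} (hcd : c ≠ d) :
    Function.Injective fun z : K × K => (z.1 / c + z.2, z.1 / d + z.2) := by
  rintro ⟨t, b⟩ ⟨t', b'⟩ h
  simp only [Prod.mk.injEq] at h
  have hinv : c⁻¹ - d⁻¹ ≠ 0 := sub_ne_zero.2 (inv_injective.ne hcd)
  have ht : t = t' := by
    apply mul_right_cancel₀ hinv
    linear_combination h.1 - h.2
  subst ht
  obtain rfl : b = b' := add_left_cancel h.1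
  rfl

theorem card_pow_three_le_four_mul_card_div_add_sq (A : Finset ℝ) (hA : A.Nonempty)
    (hpos : ∀ a ∈ A, 0 < a) :
    #A ^ 3 ≤ 4 * #(image₂ (· + ·) (image₂ (· / ·) A A) A) ^ 2 := by
  set S := image₂ (· + ·) (image₂ (· / ·) A A) A
  obtain ⟨m, hm⟩ : ∃ m, #A = m + 1 := Nat.exists_eq_add_one.2 hA.card_pos
  set a := A.orderEmbOfFin hm
  have ha (i) : 0 < a i := hpos _ (orderEmbOfFin_mem A hm i)
  have hS {t c b : ℝ} (ht : t ∈ A) (hc : c ∈ A) (hb : b ∈ A) : t / c + b ∈ S :=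
    mem_image₂_of_mem (mem_image₂_of_mem ht hc) hb
  set f : Fin m → ℝ × ℝ → ℝ × ℝ := fun i z =>
    (z.1 / a i.succ + z.2, z.1 / a i.castSucc + z.2)
  set r : Fin m → ℝ × ℝ → ℕ := fun i z => #{u ∈ S | (f i z).1 < u ∧ u ≤ (f i z).2}
  have hgap (i : Fin m) : #(A ×ˢ A) ^ 2 ≤ 2 * #S * ∑ z ∈ A ×ˢ A, r i z := by
    refine sq_card_le_two_mul_card_mul_sum_card_Ioc_of_injOn S _ (f i)
      (injective_div_add_div_add (a.injective.ne Fin.castSucc_lt_succ.ne')).injOn ?_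
    intro z hz
    obtain ⟨ht, hb⟩ := mem_product.1 hz
    refine ⟨hS ht (orderEmbOfFin_mem A hm _) hb, hS ht (orderEmbOfFin_mem A hm _) hb, ?_⟩
    have := div_lt_div_of_pos_left (hpos _ ht) (ha i.castSucc)
      (a.strictMono Fin.castSucc_lt_succ)
    dsimp only [f]
    linarith
  have hsum_gaps : ∀ z ∈ A ×ˢ A, ∑ i, r i z ≤ #S := by
    intro z hz
    refine sum_card_Ioc_le_card_of_antitone S (g := fun j => z.1 / a j + z.2) fun j k hjk => ?_
    have := div_le_div_of_nonneg_left (hpos _ (mem_product.1 hz).1).le (ha j) (a.monotone hjk)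
    dsimp only
    linarith
  have hsum : #(A ×ˢ A) * (m * #(A ×ˢ A)) ≤ #(A ×ˢ A) * (2 * #S ^ 2) := by
    calc #(A ×ˢ A) * (m * #(A ×ˢ A)) = ∑ i : Fin m, #(A ×ˢ A) ^ 2 := by
          rw [sum_const, card_univ, Fintype.card_fin, smul_eq_mul]; ring
      _ ≤ ∑ i : Fin m, 2 * #S * ∑ z ∈ A ×ˢ A, r i z := sum_le_sum fun i _ => hgap i
      _ = 2 * #S * ∑ z ∈ A ×ˢ A, ∑ i, r i z := by rw [← mul_sum, sum_comm]
      _ ≤ 2 * #S * ∑ z ∈ A ×ˢ A, #S := by gcongr with z hz; exact hsum_gaps z hz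
      _ = #(A ×ˢ A) * (2 * #S ^ 2) := by rw [sum_const, smul_eq_mul]; ring
  have hcount : m * (m + 1) ^ 2 ≤ 2 * #S ^ 2 := by
    have h := Nat.le_of_mul_le_mul_left hsum (hA.product hA).card_pos
    rwa [card_product, hm, ← sq] at h
  rw [hm]
  rcases m with _ | m
  · have : 0 < #S := ((hA.image₂ hA).image₂ hA).card_pos
    nlinarith
  · nlinarith

theorem rpow_three_halves_le_of_pow_three_le_sq {x y : ℝ} (hx : 0 ≤ x) (hy : 0 ≤ y)
    (h : x ^ 3 ≤ y ^ 2) : x ^ ((3 : ℝ) / 2) ≤ y := by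
  have hsq : (x ^ ((3 : ℝ) / 2)) ^ 2 = x ^ 3 := by
    rw [← Real.rpow_natCast, ← Real.rpow_mul hx]
    norm_num
  rw [← pow_le_pow_iff_left₀ (Real.rpow_nonneg hx _) hy two_ne_zero, hsq]
  exact h

theorem ratio_plus_A_threshold :
    ∃ c : ℝ, 0 < c ∧ ∀ A : Finset ℝ, A.Nonempty → (∀ a ∈ A, 0 < a) →
      c * (A.card : ℝ) ^ ((3 : ℝ) / 2) ≤
        ((Finset.image₂ (· + ·) (Finset.image₂ (· / ·) A A) A).card : ℝ) := by
  refine ⟨1 / 2, by norm_num, fun A hA hpos => ?_⟩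
  have h : (#A : ℝ) ^ 3 ≤ (2 * #(image₂ (· + ·) (image₂ (· / ·) A A) A) : ℝ) ^ 2 := by
    exact_mod_cast (card_pow_three_le_four_mul_card_div_add_sq A hA hpos).trans_eq (by ring)
  have := rpow_three_halves_le_of_pow_three_le_sq (by positivity) (by positivity) h
  linarith
end

section
/- For any finite nonempty set A of positive real numbers, |AA + A| ≫ |A|^{3/2}, where AA + A = {ab + c : a,b,c ∈ A}. -/
/-!
With `n = |A|`, split `A`, listed increasingly, into about `√n` blocks of about `√n` consecutive
elements, and for `x ∈ A` label each pair `(a, b) ∈ A × A` by the blocks of `a` and `b` and by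
`x * a + b ∈ AA + A`. As `x > 0`, the pairs on a line `x * a + b = v` form a staircase meeting at
most `2√n` pairs of blocks, so there are at most `2√n |AA + A|` labels, and by Cauchy–Schwarz at
least `n⁴ / (2√n |AA + A|)` pairs of pairs share a label. Conversely two distinct pairs sharing a
label determine `x` and come from a common pair of blocks, so summed over `x` there are at most
`n³ + (n √n)²` such coincidences. Comparing the two counts gives `|AA + A| ≥ n^(3/2) / 20`.
-/

open Finset

lemma exists_monotoneOn_blocks {α : Type*} [LinearOrder α] (A : Finset α) {u B : ℕ} (hu : 0 < u)
    (hAB : #A ≤ u * B) :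
    ∃ f : α → ℕ, MonotoneOn f A ∧ (∀ a ∈ A, f a < B) ∧ ∀ i, #{a ∈ A | f a = i} ≤ u := by
  set rank : α → ℕ := fun a => #{b ∈ A | b < a}
  have rank_strictMonoOn : StrictMonoOn rank A := fun a ha a' _ haa' =>
    card_lt_card <| (ssubset_iff_of_subset
      (monotone_filter_right A fun _ _ hb => hb.trans haa')).2
      ⟨a, mem_filter.2 ⟨ha, haa'⟩, by simp⟩
  have rank_lt_card : ∀ a ∈ A, rank a < #A := fun a ha =>
    card_lt_card ⟨filter_subset _ _, fun h => by simpa using h ha⟩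
  refine ⟨fun a => rank a / u, fun a ha a' ha' haa' => Nat.div_le_div_right
      (rank_strictMonoOn.monotoneOn ha ha' haa'),
    fun a ha => Nat.div_lt_of_lt_mul ((rank_lt_card a ha).trans_le hAB), fun i => ?_⟩
  have hmaps : ∀ a ∈ A.filter (fun a => rank a / u = i), rank a ∈ Ico (i * u) (i * u + u) := by
    intro a ha
    rw [mem_filter] at ha
    rw [mem_Ico, ← ha.2]
    constructor
    · exact Nat.div_mul_le_self _ _
    · rw [← Nat.succ_mul]; exact Nat.lt_mul_of_div_lt (Nat.lt_succ_self _) hu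
  simpa using card_le_card_of_injOn rank hmaps
    (rank_strictMonoOn.injOn.mono (coe_subset.2 (filter_subset _ _)))

section Collisions

variable {α β : Type*} [DecidableEq β]

def collisionCount (G : Finset α) (φ : α → β) : ℕ := #{pq ∈ G ×ˢ G | φ pq.1 = φ pq.2}

lemma collisionCount_eq_sum_sq (G : Finset α) (φ : α → β) :
    collisionCount G φ = ∑ v ∈ G.image φ, #{p ∈ G | φ p = v} ^ 2 := by
  rw [collisionCount, card_eq_sum_card_fiberwise (f := fun pq => φ pq.1)
    (t := G.image φ) fun pq hpq => mem_image_of_mem φ (mem_product.1 (mem_filter.1 hpq).1).1]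
  refine sum_congr rfl fun v _ => ?_
  rw [sq, ← card_product]
  congr 1
  ext ⟨p, q⟩
  simp only [mem_filter, mem_product]
  constructor
  · rintro ⟨⟨⟨hp, hq⟩, hpq⟩, rfl⟩
    exact ⟨⟨hp, rfl⟩, hq, hpq.symm⟩
  · rintro ⟨⟨hp, rfl⟩, hq, hqv⟩
    exact ⟨⟨⟨hp, hq⟩, hqv.symm⟩, rfl⟩

lemma sq_card_le_card_image_mul_collisionCount (G : Finset α) (φ : α → β) :
    #G ^ 2 ≤ #(G.image φ) * collisionCount G φ := by
  rw [card_eq_sum_card_image φ G, collisionCount_eq_sum_sq]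
  exact sq_sum_le_card_mul_sum_sq

lemma collisionCount_le_card_mul {G : Finset α} {φ : α → β} {u : ℕ}
    (hφ : ∀ v, #{p ∈ G | φ p = v} ≤ u) : collisionCount G φ ≤ #G * u := by
  rw [collisionCount_eq_sum_sq, card_eq_sum_card_image φ G, sum_mul]
  exact sum_le_sum fun v _ => by rw [sq]; exact Nat.mul_le_mul_left _ (hφ v)

end Collisions

section Lines

variable {R : Type*} [CommRing R]

lemma card_image_blocks_line_le [DecidableEq R] [LinearOrder R] [IsStrictOrderedRing R]
    {A A' D : Finset R} {f g : R → ℕ} {B : ℕ} {x : R} (hx : 0 < x)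
    (hf : MonotoneOn f A) (hg : MonotoneOn g A') (hfB : ∀ a ∈ A, f a < B)
    (hgB : ∀ b ∈ A', g b < B) (hD : ∀ a ∈ A, ∀ b ∈ A', x * a + b ∈ D) :
    #((A ×ˢ A').image fun p => (f p.1, g p.2, x * p.1 + p.2)) ≤ #D * (2 * B) := by
  set ψ : R × R → ℕ × ℕ × R := fun p => (f p.1, g p.2, x * p.1 + p.2)
  -- Along a line `x * a + b = v` with `x > 0`, `b` decreases as `a` increases, so the block of
  -- `a` can only go up and that of `b` only down: `f a - g b` (shifted by `B`) determines both.
  set θ : ℕ × ℕ × R → R × ℕ := fun k => (k.2.2, k.1 + B - k.2.1)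
  have stair : ∀ p ∈ A ×ˢ A', ∀ p' ∈ A ×ˢ A', p.1 ≤ p'.1 → θ (ψ p) = θ (ψ p') → ψ p = ψ p' := by
    rintro ⟨a, b⟩ hab ⟨a', b'⟩ hab' (haa' : a ≤ a') h
    obtain ⟨ha, hb⟩ : a ∈ A ∧ b ∈ A' := mem_product.1 hab
    obtain ⟨ha', hb'⟩ : a' ∈ A ∧ b' ∈ A' := mem_product.1 hab'
    simp only [θ, ψ, Prod.mk.injEq] at h ⊢
    obtain ⟨hv, hk⟩ := h
    have hbb' : b' ≤ b := by linarith [mul_le_mul_of_nonneg_left haa' hx.le]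
    have := hf ha ha' haa'
    have := hg hb' hb hbb'
    have := hgB b hb
    have := hgB b' hb'
    exact ⟨by omega, by omega, hv⟩
  calc #((A ×ˢ A').image ψ) ≤ #(D ×ˢ range (2 * B)) := by
        refine card_le_card_of_injOn θ ?_ ?_
        · simp only [Set.MapsTo, coe_image, Set.mem_image, mem_coe, mem_product, mem_range]
          rintro _ ⟨⟨a, b⟩, ⟨ha, hb⟩, rfl⟩
          exact ⟨hD a ha b hb, by have := hfB a ha; have := hgB b hb; simp only [θ, ψ]; omega⟩
        · simp only [Set.InjOn, coe_image, Set.mem_image, mem_coe]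
          rintro _ ⟨p, hp, rfl⟩ _ ⟨p', hp', rfl⟩ h
          rcases le_total p.1 p'.1 with hpp' | hp'p
          exacts [stair p hp p' hp' hpp' h, (stair p' hp' p hp hp'p h.symm).symm]
    _ = #D * (2 * B) := by rw [card_product, card_range]

lemma eq_of_mul_add_eq_mul_add [NoZeroDivisors R] {x y a b a' b' : R} (hab : (a, b) ≠ (a', b'))
    (hx : x * a + b = x * a' + b') (hy : y * a + b = y * a' + b') : x = y := by
  have ha : a ≠ a' := by
    rintro rfl
    exact hab (by simp only [add_left_cancel hx])
  have : (x - y) * (a - a') = 0 := by linear_combination hx - hy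
  simpa [sub_eq_zero, ha] using this

lemma sum_collisionCount_blocks_line_le [DecidableEq R] [NoZeroDivisors R] (X A A' : Finset R)
    (f g : R → ℕ) :
    ∑ x ∈ X, collisionCount (A ×ˢ A') (fun p => (f p.1, g p.2, x * p.1 + p.2)) ≤
      #X * #(A ×ˢ A') + collisionCount A f * collisionCount A' g := by
  set G := A ×ˢ A'
  set P := {pq ∈ G ×ˢ G | pq.1 ≠ pq.2 ∧ f pq.1.1 = f pq.2.1 ∧ g pq.1.2 = g pq.2.2}
  set line : R → (R × R) × (R × R) → Prop :=
    fun x pq => x * pq.1.1 + pq.1.2 = x * pq.2.1 + pq.2.2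
  have diag_or_P : ∀ x, collisionCount G (fun p => (f p.1, g p.2, x * p.1 + p.2)) ≤
      #G + #(P.bipartiteAbove line x) := by
    intro x
    calc _ ≤ #(G.diag ∪ P.bipartiteAbove line x) := by
          refine card_le_card fun pq hpq => ?_
          simp only [mem_filter, Prod.mk.injEq] at hpq
          by_cases h : pq.1 = pq.2
          · exact mem_union_left _ (mem_diag.2 ⟨(mem_product.1 hpq.1).1, h⟩)
          · exact mem_union_right _ ((mem_bipartiteAbove line).2
              ⟨mem_filter.2 ⟨hpq.1, h, hpq.2.1, hpq.2.2.1⟩, hpq.2.2.2⟩)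
      _ ≤ #G + #(P.bipartiteAbove line x) := (card_union_le _ _).trans_eq (by rw [diag_card])
  have lines_meet_once : ∀ pq ∈ P, #(X.bipartiteBelow line pq) ≤ 1 := fun pq hpq =>
    card_le_one.2 fun x hx y hy => eq_of_mul_add_eq_mul_add (mem_filter.1 hpq).2.1
      ((mem_bipartiteBelow line).1 hx).2 ((mem_bipartiteBelow line).1 hy).2
  have card_P : #P ≤ collisionCount A f * collisionCount A' g := by
    rw [collisionCount, collisionCount, ← card_product]
    refine card_le_card_of_injOn (fun pq => ((pq.1.1, pq.2.1), (pq.1.2, pq.2.2))) ?_ ?_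
    · intro pq hpq
      simp only [P, G, mem_coe, mem_filter, mem_product] at hpq ⊢
      exact ⟨⟨⟨hpq.1.1.1, hpq.1.2.1⟩, hpq.2.2.1⟩, ⟨hpq.1.1.2, hpq.1.2.2⟩, hpq.2.2.2⟩
    · intro pq _ pq' _ h
      simp only [Prod.mk.injEq] at h
      exact Prod.ext (Prod.ext h.1.1 h.2.1) (Prod.ext h.1.2 h.2.2)
  calc ∑ x ∈ X, collisionCount G (fun p => (f p.1, g p.2, x * p.1 + p.2))
      ≤ ∑ x ∈ X, (#G + #(P.bipartiteAbove line x)) := sum_le_sum fun x _ => diag_or_P x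
    _ = #X * #G + ∑ pq ∈ P, #(X.bipartiteBelow line pq) := by
      rw [sum_add_distrib, sum_const, smul_eq_mul,
        sum_card_bipartiteAbove_eq_sum_card_bipartiteBelow]
    _ ≤ #X * #G + ∑ _pq ∈ P, 1 := by gcongr with pq hpq; exact lines_meet_once pq hpq
    _ ≤ #X * #G + collisionCount A f * collisionCount A' g := by
      rw [sum_const, smul_eq_mul, mul_one]; gcongr

end Lines

lemma rpow_three_halves_le_of_pow_five_le {n K : ℕ} (hn : 0 < n)
    (h : n ^ 5 ≤ 2 * K * (n.sqrt + 1) * (n ^ 3 + n ^ 2 * (n.sqrt + 1) ^ 2)) :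
    1 / 20 * (n : ℝ) ^ ((3 : ℝ) / 2) ≤ K := by
  set s := √(n : ℝ) with hs
  have hn' : (1 : ℝ) ≤ n := by exact_mod_cast hn
  have hs1 : 1 ≤ s := Real.one_le_sqrt.2 hn'
  have hs2 : s ^ 2 = n := Real.sq_sqrt (by positivity)
  have hu : ((n.sqrt + 1 : ℕ) : ℝ) ≤ 2 * s := by
    push_cast; linarith [Real.nat_sqrt_le_real_sqrt (a := n)]
  have h' : (n : ℝ) ^ 5 ≤ 20 * K * s * n ^ 3 := by
    have hR : (n : ℝ) ^ 5 ≤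
        2 * K * ((n.sqrt + 1 : ℕ) : ℝ) * (n ^ 3 + n ^ 2 * ((n.sqrt + 1 : ℕ) : ℝ) ^ 2) := by
      exact_mod_cast h
    calc (n : ℝ) ^ 5 ≤ 2 * K * (2 * s) * (n ^ 3 + n ^ 2 * (2 * s) ^ 2) := by
          refine hR.trans ?_; gcongr
      _ = 20 * K * s * n ^ 3 := by rw [mul_pow, hs2]; ring
  have h32 : (n : ℝ) ^ ((3 : ℝ) / 2) = n * s := by
    rw [hs, Real.sqrt_eq_rpow, show (3 : ℝ) / 2 = 1 + 1 / 2 by norm_num,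
      Real.rpow_add (by positivity), Real.rpow_one]
  have hpos : 0 < (n : ℝ) ^ 3 * s := by positivity
  rw [h32, ← mul_le_mul_iff_of_pos_left hpos]
  calc (n : ℝ) ^ 3 * s * (1 / 20 * (n * s)) = (n : ℝ) ^ 5 / 20 := by
        rw [← hs2]; ring
    _ ≤ (n : ℝ) ^ 3 * s * K := by linarith

theorem product_plus_A_threshold :
    ∃ c : ℝ, 0 < c ∧ ∀ A : Finset ℝ, A.Nonempty → (∀ a ∈ A, 0 < a) →
      c * (A.card : ℝ) ^ ((3 : ℝ) / 2) ≤
        ((Finset.image₂ (· + ·) (Finset.image₂ (· * ·) A A) A).card : ℝ) := by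
  refine ⟨1 / 20, by norm_num, fun A hA hpos => ?_⟩
  set n := #A
  set u := n.sqrt + 1
  set D := image₂ (· + ·) (image₂ (· * ·) A A) A
  obtain ⟨f, hf, hfu, hfib⟩ :=
    exists_monotoneOn_blocks A (Nat.succ_pos _) ((Nat.lt_succ_sqrt' n).le.trans_eq (sq u))
  set ψ : ℝ → ℝ × ℝ → ℕ × ℕ × ℝ := fun x p => (f p.1, f p.2, x * p.1 + p.2)
  refine rpow_three_halves_le_of_pow_five_le (card_pos.2 hA) ?_
  calc n ^ 5 = ∑ _x ∈ A, #(A ×ˢ A) ^ 2 := by rw [sum_const, card_product, smul_eq_mul]; ring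
    _ ≤ ∑ x ∈ A, #((A ×ˢ A).image (ψ x)) * collisionCount (A ×ˢ A) (ψ x) :=
      sum_le_sum fun x _ => sq_card_le_card_image_mul_collisionCount _ _
    _ ≤ ∑ x ∈ A, #D * (2 * u) * collisionCount (A ×ˢ A) (ψ x) := by
      gcongr with x hx
      exact card_image_blocks_line_le (hpos x hx) hf hf hfu hfu fun a ha b hb =>
        mem_image₂_of_mem (mem_image₂_of_mem hx ha) hb
    _ ≤ #D * (2 * u) * (n * #(A ×ˢ A) + collisionCount A f * collisionCount A f) := by
      rw [← mul_sum]; gcongr; exact sum_collisionCount_blocks_line_le A A A f f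
    _ ≤ #D * (2 * u) * (n * #(A ×ˢ A) + n * u * (n * u)) := by
      gcongr <;> exact collisionCount_le_card_mul hfib
    _ = 2 * #D * u * (n ^ 3 + n ^ 2 * u ^ 2) := by rw [card_product]; ring
end

section
/- Let f : ℝ → ℝ be strictly convex (or strictly concave) and let X, Y, Z be finite nonempty sets of reals. Then |f(X) + Y| · |X + Z| ≫ |X|^{3/2} · |Y|^{1/2} · |Z|^{1/2}, with an absolute implied constant. -/
/-!
List `X` as `x₀ < ⋯ < x_k` and let `S ⊇ X + Z`, `T ⊇ f(X) + Y`. For fixed `z` the points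
`xᵢ + z` increase with `i`, and for fixed `y` the points `f(xᵢ) + y` first decrease and then
increase (convexity), so the ranks of these points in `S`, resp. `T`, have total variation at most
`2|S|`, resp. `2|T|`. Hence for at least half of the triples `(i, y, z)` both steps `i → i + 1`
move the rank by only `O(|T|/k)` in `T` and `O(|S|/k)` in `S`; here `k < |S|`, and
`k < 2|T|` because a strictly convex function is at most two-to-one. Such a triple is determined by
the two pairs `(f(xᵢ) + y, f(xᵢ₊₁) + y)` and `(xᵢ + z, xᵢ₊₁ + z)`, because strict convexity
makes the increments `(xᵢ₊₁ - xᵢ, f(xᵢ₊₁) - f(xᵢ))` pairwise distinct, while there are only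
`O(|T|²/k)` and `O(|S|²/k)` pairs of points whose ranks are that close. Therefore
`k |Y| |Z| ≪ |T|² |S|² / k²`.
-/

open Finset

open scoped Pointwise

section OrderRank

variable {α : Type*} [LinearOrder α]

def orderRank (S : Finset α) (a : α) : ℤ := #{b ∈ S | b ≤ a}

def rankDist (S : Finset α) (a b : α) : ℤ := |orderRank S b - orderRank S a|

lemma orderRank_nonneg (S : Finset α) (a : α) : 0 ≤ orderRank S a :=
  Int.natCast_nonneg _

lemma orderRank_le_card (S : Finset α) (a : α) : orderRank S a ≤ #S :=
  Int.ofNat_le.2 (card_filter_le _ _)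

lemma orderRank_mono (S : Finset α) : Monotone (orderRank S) := fun _ _ hab =>
  Int.ofNat_le.2 (card_le_card (monotone_filter_right _ fun _ _ hc => hc.trans hab))

lemma orderRank_strictMonoOn (S : Finset α) : StrictMonoOn (orderRank S) S := by
  intro a _ b hb hab
  have hsub : {c ∈ S | c ≤ a} ⊆ {c ∈ S | c ≤ b} :=
    monotone_filter_right _ fun _ _ hc => hc.trans hab.le
  refine Int.ofNat_lt.2 (card_lt_card ((ssubset_iff_of_subset hsub).2 ⟨b, ?_, ?_⟩))
  · simpa using hb
  · simp [hab]

end OrderRank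

lemma card_filter_abs_sub_le {ι : Type*} (S : Finset ι) {r : ι → ℤ} (hr : Set.InjOn r S)
    (Δ : ℕ) : #{p ∈ S ×ˢ S | |r p.2 - r p.1| ≤ Δ} ≤ #S * (2 * Δ + 1) := by
  calc #{p ∈ S ×ˢ S | |r p.2 - r p.1| ≤ Δ}
      ≤ #(S ×ˢ Icc (-(Δ : ℤ)) Δ) := by
        refine card_le_card_of_injOn (fun p => (p.1, r p.2 - r p.1)) ?_ ?_
        · intro p hp
          simp only [coe_filter, mem_product, Set.mem_ofPred_eq] at hp
          exact mem_product.2 ⟨hp.1.1, mem_Icc.2 (abs_le.1 hp.2)⟩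
        · rintro ⟨u, v⟩ hp ⟨u', v'⟩ hp' he
          simp only [coe_filter, mem_product, Set.mem_ofPred_eq] at hp hp'
          simp only [Prod.mk.injEq] at he ⊢
          obtain ⟨rfl, he⟩ := he
          exact ⟨rfl, hr hp.1.2 hp'.1.2 (by linarith)⟩
    _ = #S * (2 * Δ + 1) := by
        rw [card_product, Int.card_Icc]
        congr 1
        omega

lemma card_filter_lt_mul_le_sum {ι : Type*} (I : Finset ι) {g : ι → ℤ}
    (hg : ∀ i ∈ I, 0 ≤ g i) (c : ℕ) : #{i ∈ I | (c : ℤ) < g i} * ((c : ℤ) + 1) ≤ ∑ i ∈ I, g i :=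
  calc #{i ∈ I | (c : ℤ) < g i} * ((c : ℤ) + 1)
      ≤ ∑ i ∈ I with (c : ℤ) < g i, g i := by
        rw [← nsmul_eq_mul]
        exact card_nsmul_le_sum _ _ _ fun i hi => (mem_filter.1 hi).2
    _ ≤ ∑ i ∈ I, g i :=
        sum_le_sum_of_subset_of_nonneg (filter_subset _ _) fun i hi _ => hg i hi

lemma sum_range_abs_sub_eq {a : ℕ → ℤ} {m k : ℕ} (hmk : m ≤ k)
    (ha : AntitoneOn a (Set.Iic m)) (ha' : MonotoneOn a (Set.Icc m k)) :
    ∑ i ∈ range k, |a (i + 1) - a i| = (a 0 - a m) + (a k - a m) := by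
  have hdown : ∀ i ∈ range m, |a (i + 1) - a i| = -(a (i + 1) - a i) := fun i hi => by
    have hi := mem_range.1 hi
    exact abs_of_nonpos (sub_nonpos.2
      (ha (Set.mem_Iic.2 (by omega)) (Set.mem_Iic.2 (by omega)) (Nat.le_succ i)))
  have hup : ∀ i ∈ Ico m k, |a (i + 1) - a i| = a (i + 1) - a i := fun i hi => by
    have hi := mem_Ico.1 hi
    exact abs_of_nonneg (sub_nonneg.2
      (ha' ⟨by omega, by omega⟩ ⟨by omega, by omega⟩ (Nat.le_succ i)))
  rw [← sum_range_add_sum_Ico _ hmk, sum_congr rfl hdown, sum_congr rfl hup, sum_neg_distrib,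
    sum_range_sub, sum_Ico_sub _ hmk]
  ring

lemma four_mul_card_filter_lt_le {a : ℕ → ℤ} {k V : ℕ} (hk : 0 < k)
    (hV : ∑ i ∈ range k, |a (i + 1) - a i| ≤ 2 * V) :
    4 * #{i ∈ range k | ((8 * V / k : ℕ) : ℤ) < |a (i + 1) - a i|} ≤ k := by
  have hdiv : 8 * V < k * (8 * V / k + 1) := Nat.lt_mul_div_succ (8 * V) hk
  generalize 8 * V / k = Δ at hdiv ⊢
  have hmarkov :=
    card_filter_lt_mul_le_sum (range k) (fun i _ => abs_nonneg (a (i + 1) - a i)) Δ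
  have : ((4 * #{i ∈ range k | (Δ : ℤ) < |a (i + 1) - a i|} : ℕ) : ℤ) < k := by
    refine lt_of_mul_lt_mul_right ?_ (by positivity : (0 : ℤ) ≤ Δ + 1)
    have : ((8 * V : ℕ) : ℤ) < k * (Δ + 1) := by exact_mod_cast hdiv
    push_cast at this ⊢
    linarith
  exact_mod_cast this.le

lemma card_mul_card_le_two_mul_card_filter {ι κ : Type*} (I : Finset ι) (J : Finset κ)
    (P : ι → κ → Prop) [∀ i j, Decidable (P i j)]
    (h : ∀ j ∈ J, 2 * #{i ∈ I | ¬ P i j} ≤ #I) :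
    #I * #J ≤ 2 * #{w ∈ I ×ˢ J | P w.1 w.2} := by
  have hcount : #{w ∈ I ×ˢ J | P w.1 w.2} = ∑ j ∈ J, #{i ∈ I | P i j} := by
    simp only [card_filter, sum_product]
    exact sum_comm
  rw [hcount, mul_sum, mul_comm, ← smul_eq_mul, ← sum_const]
  refine sum_le_sum fun j hj => ?_
  have := h j hj
  have := card_filter_add_card_filter_not (s := I) (P · j)
  omega

lemma Finset.exists_strictMonoOn_Iic_mem {α : Type*} [LinearOrder α] {X : Finset α} {n : ℕ}
    (hX : #X = n + 1) : ∃ x : ℕ → α, StrictMonoOn x (Set.Iic n) ∧ ∀ i ≤ n, x i ∈ X := by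
  refine ⟨fun i => X.orderEmbOfFin hX ⟨min i n, by omega⟩, fun i hi j hj hij => ?_,
    fun i _ => X.orderEmbOfFin_mem hX _⟩
  simp only [Set.mem_Iic] at hi hj
  exact (X.orderEmbOfFin hX).strictMono
    (by simp [Fin.lt_def, min_eq_left hi, min_eq_left hj, hij])

section Convexity

variable {𝕜 : Type*} [Field 𝕜] [LinearOrder 𝕜] [IsStrictOrderedRing 𝕜] {s : Set 𝕜}
  {f : 𝕜 → 𝕜}

lemma StrictConvexOn.card_filter_eq_le_two (hf : StrictConvexOn 𝕜 s f) {A : Finset 𝕜}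
    (hA : ↑A ⊆ s) (v : 𝕜) : #{a ∈ A | f a = v} ≤ 2 := by
  by_contra! h
  set F := {a ∈ A | f a = v}
  let e := F.orderEmbOfFin rfl
  have hmem : ∀ i, e i ∈ A ∧ f (e i) = v := fun i => mem_filter.1 (F.orderEmbOfFin_mem rfl i)
  have h01 : e ⟨0, by omega⟩ < e ⟨1, by omega⟩ := e.strictMono (by simp [Fin.lt_def])
  have h12 : e ⟨1, by omega⟩ < e ⟨2, by omega⟩ := e.strictMono (by simp [Fin.lt_def])
  have := hf.lt_on_openSegment (hA (hmem _).1) (hA (hmem _).1) (h01.trans h12).ne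
    (by rw [openSegment_eq_Ioo (h01.trans h12)]; exact ⟨h01, h12⟩)
  simp [(hmem _).2] at this

lemma StrictConvexOn.slope_lt_slope (hf : StrictConvexOn 𝕜 s f) {a b c d : 𝕜} (ha : a ∈ s)
    (hd : d ∈ s) (hab : a < b) (hbd : b < d) (hac : a < c) (hcd : c < d) :
    (f b - f a) / (b - a) < (f d - f c) / (d - c) :=
  (hf.secant_strict_mono_aux2 ha hd hab hbd).trans (hf.secant_strict_mono_aux3 ha hd hac hcd)

lemma StrictConvexOn.injOn_increments (hf : StrictConvexOn 𝕜 s f) {x : ℕ → 𝕜} {k : ℕ}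
    (hx : StrictMonoOn x (Set.Iic k)) (hxs : ∀ i ≤ k, x i ∈ s) :
    Set.InjOn (fun i => (x (i + 1) - x i, f (x (i + 1)) - f (x i))) (Set.Iio k) := by
  have hlt : ∀ {i j}, i < j → j ≤ k → x i < x j := fun hij hj =>
    hx (Set.mem_Iic.2 (by omega)) (Set.mem_Iic.2 hj) hij
  have key : ∀ {i j}, i < j → j < k → (f (x (i + 1)) - f (x i)) / (x (i + 1) - x i) <
      (f (x (j + 1)) - f (x j)) / (x (j + 1) - x j) := fun hij hj =>
    hf.slope_lt_slope (hxs _ (by omega)) (hxs _ (by omega)) (hlt (by omega) (by omega))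
      (hlt (by omega) (by omega)) (hlt hij (by omega)) (hlt (by omega) (by omega))
  intro i hi j hj he
  simp only [Prod.mk.injEq] at he
  by_contra hne
  rcases Nat.lt_or_gt_of_ne hne with h | h
  · exact (key h hj).ne (by rw [he.1, he.2])
  · exact (key h hi).ne (by rw [he.1, he.2])

lemma ConvexOn.exists_antitoneOn_monotoneOn_comp (hf : ConvexOn 𝕜 s f) {x : ℕ → 𝕜} {k : ℕ}
    (hx : MonotoneOn x (Set.Iic k)) (hxs : ∀ i ≤ k, x i ∈ s) :
    ∃ m ≤ k, AntitoneOn (f ∘ x) (Set.Iic m) ∧ MonotoneOn (f ∘ x) (Set.Icc m k) := by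
  obtain ⟨m, hm, hmin⟩ :=
    (range (k + 1)).exists_min_image (f ∘ x) (nonempty_range_iff.2 k.succ_ne_zero)
  have hmk : m ≤ k := Nat.lt_succ_iff.1 (mem_range.1 hm)
  have hmin' : ∀ i ≤ k, f (x m) ≤ f (x i) := fun i hi => hmin i (mem_range.2 (by omega))
  have hbetween : ∀ {i j l}, i ≤ j → j ≤ l → l ≤ k → f (x j) ≤ max (f (x i)) (f (x l)) := by
    intro i j l hij hjl hlk
    have hle : ∀ {a b}, a ≤ b → b ≤ k → x a ≤ x b := fun hab hb =>
      hx (Set.mem_Iic.2 (by omega)) (Set.mem_Iic.2 hb) hab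
    refine hf.le_on_segment (hxs _ (by omega)) (hxs _ hlk) ?_
    rw [segment_eq_Icc (hle (hij.trans hjl) hlk)]
    exact ⟨hle hij (by omega), hle hjl hlk⟩
  refine ⟨m, hmk, fun i hi j hj hij => ?_, fun i hi j hj hij => ?_⟩
  · simpa [max_eq_left (hmin' i (hi.trans hmk))] using hbetween hij hj hmk
  · simpa [max_eq_right (hmin' j hj.2)] using hbetween hi.1 hij hj.2

lemma ConvexOn.four_mul_card_filter_lt_rankDist_le (hf : ConvexOn 𝕜 s f) {x : ℕ → 𝕜} {k : ℕ}
    (hk : 0 < k) (hx : MonotoneOn x (Set.Iic k)) (hxs : ∀ i ≤ k, x i ∈ s) (T : Finset 𝕜)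
    (y : 𝕜) :
    4 * #{i ∈ range k | ((8 * #T / k : ℕ) : ℤ) < rankDist T (f (x i) + y) (f (x (i + 1)) + y)}
      ≤ k := by
  obtain ⟨m, hmk, hanti, hmono⟩ := hf.exists_antitoneOn_monotoneOn_comp hx hxs
  have hr : Monotone fun u => orderRank T (u + y) :=
    (orderRank_mono T).comp fun _ _ h => add_le_add_left h y
  have hvar : ∑ i ∈ range k, rankDist T (f (x i) + y) (f (x (i + 1)) + y) =
      (orderRank T (f (x 0) + y) - orderRank T (f (x m) + y)) +
        (orderRank T (f (x k) + y) - orderRank T (f (x m) + y)) :=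
    sum_range_abs_sub_eq (a := fun i => orderRank T (f (x i) + y)) hmk
      (hr.comp_antitoneOn hanti) (hr.comp_monotoneOn hmono)
  refine four_mul_card_filter_lt_le (a := fun i => orderRank T (f (x i) + y)) (V := #T) hk
    (hvar.trans_le ?_)
  linarith [orderRank_nonneg T (f (x m) + y), orderRank_le_card T (f (x 0) + y),
    orderRank_le_card T (f (x k) + y)]

lemma StrictConvexOn.card_filter_rankDist_le (hf : StrictConvexOn 𝕜 s f) {x : ℕ → 𝕜} {k : ℕ}
    (hx : StrictMonoOn x (Set.Iic k)) (hxs : ∀ i ≤ k, x i ∈ s) {Y Z S T : Finset 𝕜}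
    (hT : ∀ i ≤ k, ∀ y ∈ Y, f (x i) + y ∈ T) (hS : ∀ i ≤ k, ∀ z ∈ Z, x i + z ∈ S)
    (ΔT ΔS : ℕ) :
    #{w ∈ range k ×ˢ (Y ×ˢ Z) | rankDist T (f (x w.1) + w.2.1) (f (x (w.1 + 1)) + w.2.1) ≤ ΔT ∧
        rankDist S (x w.1 + w.2.2) (x (w.1 + 1) + w.2.2) ≤ ΔS}
      ≤ #T * (2 * ΔT + 1) * (#S * (2 * ΔS + 1)) := by
  calc _ ≤ #({p ∈ T ×ˢ T | rankDist T p.1 p.2 ≤ ΔT} ×ˢ {p ∈ S ×ˢ S | rankDist S p.1 p.2 ≤ ΔS}) := by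
        refine card_le_card_of_injOn (fun w => ((f (x w.1) + w.2.1, f (x (w.1 + 1)) + w.2.1),
          (x w.1 + w.2.2, x (w.1 + 1) + w.2.2))) ?_ ?_
        · rintro ⟨i, y, z⟩ hw
          simp only [coe_filter, mem_product, mem_range, Set.mem_ofPred_eq] at hw
          obtain ⟨⟨hi, hy, hz⟩, hgT, hgS⟩ := hw
          simp only [coe_product, coe_filter, Set.mem_prod, mem_product, Set.mem_ofPred_eq]
          exact ⟨⟨⟨hT i hi.le y hy, hT (i + 1) hi y hy⟩, hgT⟩,
            ⟨⟨hS i hi.le z hz, hS (i + 1) hi z hz⟩, hgS⟩⟩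
        · rintro ⟨i, y, z⟩ hw ⟨j, y', z'⟩ hw' he
          simp only [coe_filter, mem_product, mem_range, Set.mem_ofPred_eq] at hw hw'
          simp only [Prod.mk.injEq] at he
          obtain ⟨⟨h1, h2⟩, h3, h4⟩ := he
          obtain rfl : i = j := hf.injOn_increments hx hxs hw.1.1 hw'.1.1
            (Prod.ext (by linear_combination h4 - h3) (by linear_combination h2 - h1))
          rw [add_left_cancel h1, add_left_cancel h3]
    _ ≤ #T * (2 * ΔT + 1) * (#S * (2 * ΔS + 1)) := by
        rw [card_product]
        exact Nat.mul_le_mul (card_filter_abs_sub_le _ (orderRank_strictMonoOn T).injOn _)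
          (card_filter_abs_sub_le _ (orderRank_strictMonoOn S).injOn _)

theorem StrictConvexOn.pow_three_mul_card_mul_card_le (hf : StrictConvexOn 𝕜 s f) {x : ℕ → 𝕜}
    {k : ℕ} (hx : StrictMonoOn x (Set.Iic k)) (hxs : ∀ i ≤ k, x i ∈ s) {Y Z S T : Finset 𝕜}
    (hT : ∀ i ≤ k, ∀ y ∈ Y, f (x i) + y ∈ T) (hS : ∀ i ≤ k, ∀ z ∈ Z, x i + z ∈ S)
    (hkT : k ≤ 2 * #T) (hkS : k ≤ #S) :
    k ^ 3 * #Y * #Z ≤ 612 * (#T * #S) ^ 2 := by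
  rcases Nat.eq_zero_or_pos k with rfl | hk
  · simp
  set ΔT := 8 * #T / k with hΔT
  set ΔS := 8 * #S / k with hΔS
  have hgood := hf.card_filter_rankDist_le hx hxs hT hS ΔT ΔS
  have hlower := card_mul_card_le_two_mul_card_filter (range k) (Y ×ˢ Z) (fun i w =>
    rankDist T (f (x i) + w.1) (f (x (i + 1)) + w.1) ≤ ΔT ∧
      rankDist S (x i + w.2) (x (i + 1) + w.2) ≤ ΔS) fun w _ => by
    have hbadT := hf.convexOn.four_mul_card_filter_lt_rankDist_le hk hx.monotoneOn hxs T w.1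
    have hbadS := (convexOn_id convex_univ).four_mul_card_filter_lt_rankDist_le hk
      hx.monotoneOn (fun _ _ => Set.mem_univ _) S w.2
    rw [← hΔT] at hbadT
    rw [← hΔS] at hbadS
    simp only [card_range, id] at hbadT hbadS ⊢
    calc 2 * #{i ∈ range k | ¬(_ ∧ _)}
        ≤ 2 * (#{i ∈ range k | (ΔT : ℤ) < _} + #{i ∈ range k | (ΔS : ℤ) < _}) := by
          gcongr
          simp only [not_and_or, not_le, filter_or]
          exact card_union_le _ _
      _ ≤ k := by omega
  rw [card_range, card_product] at hlower
  have hkΔT : k * (2 * ΔT + 1) ≤ 18 * #T := by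
    have : ΔT * k ≤ 8 * #T := Nat.div_mul_le_self _ _
    nlinarith
  have hkΔS : k * (2 * ΔS + 1) ≤ 17 * #S := by
    have : ΔS * k ≤ 8 * #S := Nat.div_mul_le_self _ _
    nlinarith
  calc k ^ 3 * #Y * #Z = k ^ 2 * (k * (#Y * #Z)) := by ring
    _ ≤ k ^ 2 * (2 * (#T * (2 * ΔT + 1) * (#S * (2 * ΔS + 1)))) :=
        Nat.mul_le_mul_left _ (hlower.trans (Nat.mul_le_mul_left 2 hgood))
    _ = 2 * (#T * (k * (2 * ΔT + 1))) * (#S * (k * (2 * ΔS + 1))) := by ring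
    _ ≤ 2 * (#T * (18 * #T)) * (#S * (17 * #S)) := by gcongr
    _ = 612 * (#T * #S) ^ 2 := by ring

theorem StrictConvexOn.card_pow_three_mul_card_mul_card_le
    (hf : StrictConvexOn 𝕜 s f) {X : Finset 𝕜} (hX : ↑X ⊆ s) (Y Z : Finset 𝕜) :
    #X ^ 3 * #Y * #Z ≤ 4896 * (#(X.image f + Y) * #(X + Z)) ^ 2 := by
  rcases X.eq_empty_or_nonempty with rfl | hXne
  · simp
  rcases Y.eq_empty_or_nonempty with rfl | hY
  · simp
  rcases Z.eq_empty_or_nonempty with rfl | hZ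
  · simp
  obtain ⟨n, hn⟩ := Nat.exists_eq_add_one_of_ne_zero hXne.card_pos.ne'
  have hXT : #X ≤ 2 * #(X.image f + Y) :=
    (card_le_mul_card_image X 2 fun v _ => hf.card_filter_eq_le_two hX v).trans
      (Nat.mul_le_mul_left 2 (card_le_card_add_right hY))
  have hXS : #X ≤ #(X + Z) := card_le_card_add_right hZ
  rcases Nat.eq_zero_or_pos n with rfl | hn0
  · have hYT : #Y ≤ #(X.image f + Y) := card_le_card_add_left (hXne.image f)
    have hZS : #Z ≤ #(X + Z) := card_le_card_add_left hXne
    rw [hn]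
    nlinarith [Nat.mul_le_mul hYT hZS]
  obtain ⟨x, hx, hxX⟩ := exists_strictMonoOn_Iic_mem hn
  have hcore := hf.pow_three_mul_card_mul_card_le (Y := Y) (Z := Z) hx
    (fun i hi => hX (hxX i hi)) (fun i hi y hy => add_mem_add (mem_image_of_mem f (hxX i hi)) hy)
    (fun i hi z hz => add_mem_add (hxX i hi) hz) (by omega) (by omega)
  calc #X ^ 3 * #Y * #Z ≤ (2 * n) ^ 3 * #Y * #Z := by rw [hn]; gcongr; omega
    _ = 8 * (n ^ 3 * #Y * #Z) := by ring
    _ ≤ 4896 * (#(X.image f + Y) * #(X + Z)) ^ 2 := by linarith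

end Convexity

lemma card_image_neg_add_neg {α β : Type*} [AddCommGroup α] [DecidableEq α] (f : β → α)
    (X : Finset β) (Y : Finset α) :
    #(X.image (-f) + -Y) = #(X.image f + Y) := by
  rw [← card_neg, neg_add, neg_neg, ← image_neg_eq_neg, image_image]
  simp [Function.comp_def]

lemma rpow_three_halves_mul_rpow_half_mul_rpow_half_le {n y z p : ℝ} (hn : 0 ≤ n) (hy : 0 ≤ y)
    (hp : 0 ≤ p) (h : n ^ 3 * y * z ≤ p ^ 2) :
    n ^ ((3 : ℝ) / 2) * y ^ ((1 : ℝ) / 2) * z ^ ((1 : ℝ) / 2) ≤ p :=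
  calc n ^ ((3 : ℝ) / 2) * y ^ ((1 : ℝ) / 2) * z ^ ((1 : ℝ) / 2) = √(n ^ 3 * y * z) := by
        rw [Real.sqrt_mul (by positivity), Real.sqrt_mul (by positivity), Real.sqrt_eq_rpow,
          Real.sqrt_eq_rpow, Real.sqrt_eq_rpow, ← Real.rpow_natCast, ← Real.rpow_mul hn]
        norm_num
    _ ≤ √(p ^ 2) := Real.sqrt_le_sqrt h
    _ = p := Real.sqrt_sq hp

theorem elekes_nathanson_ruzsa :
    ∃ c : ℝ, 0 < c ∧ ∀ f : ℝ → ℝ,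
      (StrictConvexOn ℝ Set.univ f ∨ StrictConcaveOn ℝ Set.univ f) →
      ∀ X Y Z : Finset ℝ, X.Nonempty → Y.Nonempty → Z.Nonempty →
        c * (X.card : ℝ) ^ ((3 : ℝ) / 2) * (Y.card : ℝ) ^ ((1 : ℝ) / 2) *
            (Z.card : ℝ) ^ ((1 : ℝ) / 2) ≤
          ((Finset.image₂ (· + ·) (X.image f) Y).card : ℝ) *
            ((Finset.image₂ (· + ·) X Z).card : ℝ) := by
  refine ⟨1 / 70, by norm_num, fun f hf X Y Z _ _ _ => ?_⟩
  have key : #X ^ 3 * #Y * #Z ≤ 4896 * (#(X.image f + Y) * #(X + Z)) ^ 2 := by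
    rcases hf with hf | hf
    · exact hf.card_pow_three_mul_card_mul_card_le (Set.subset_univ _) Y Z
    · simpa [card_image_neg_add_neg] using
        hf.neg.card_pow_three_mul_card_mul_card_le (Set.subset_univ _) (-Y) Z
  have hreal : (#X : ℝ) ^ 3 * #Y * #Z ≤ (70 * (#(X.image f + Y) * #(X + Z) : ℝ)) ^ 2 := by
    have : ((#X ^ 3 * #Y * #Z : ℕ) : ℝ) ≤ ((4896 * (#(X.image f + Y) * #(X + Z)) ^ 2 : ℕ) : ℝ) :=
      by exact_mod_cast key
    push_cast at this
    nlinarith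
  have := rpow_three_halves_mul_rpow_half_mul_rpow_half_le (by positivity) (by positivity)
    (by positivity) hreal
  change _ ≤ (#(X.image f + Y) : ℝ) * #(X + Z)
  linarith
end

section
/- Let ℓ and ℓ' be two distinct lines through the origin in ℝ² with positive slopes λ < λ', and let P ⊂ ℓ and Q ⊂ ℓ' be finite sets of points lying in the open positive quadrant. Then |P + Q| = |P|·|Q|, and every point of P + Q has slope strictly between λ and λ' (i.e., lies strictly between the two lines). -/
/-!
The two lines meet only at the origin, so `p + q = p' + q'` forces `p - p' = q' - q = 0`.
The slope of `p + q` is the mediant `(p.2 + q.2) / (p.1 + q.1)` of the slopes of `p` and `q`,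
hence lies strictly between them.
-/

open Finset

section Mediant

variable {K : Type*} [Field K] [LinearOrder K] [IsStrictOrderedRing K] {a b c d : K}

theorem div_lt_add_div_add (hb : 0 < b) (hd : 0 < d) (h : a / b < c / d) :
    a / b < (a + c) / (b + d) := by
  rw [div_lt_div_iff₀ hb hd] at h
  rw [div_lt_div_iff₀ hb (add_pos hb hd)]
  linarith

theorem add_div_add_lt_div (hb : 0 < b) (hd : 0 < d) (h : a / b < c / d) :
    (a + c) / (b + d) < c / d := by
  rw [div_lt_div_iff₀ hb hd] at h
  rw [div_lt_div_iff₀ (add_pos hb hd) hd]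
  linarith

end Mediant

theorem Finset.card_image₂_add_of_disjoint {G : Type*} [AddCommGroup G] [DecidableEq G]
    {U V : AddSubgroup G} (hUV : Disjoint U V) {s t : Finset G}
    (hs : ∀ x ∈ s, x ∈ U) (ht : ∀ y ∈ t, y ∈ V) :
    #(image₂ (· + ·) s t) = #s * #t := by
  rw [card_image₂_iff]
  rintro ⟨x, y⟩ ⟨hx, hy⟩ ⟨x', y'⟩ ⟨hx', hy'⟩ hsum
  have hdiff : x - x' = y' - y := by
    simp only at hsum
    rw [sub_eq_sub_iff_add_eq_add, hsum, add_comm]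
  have hx_eq : x - x' = 0 :=
    AddSubgroup.disjoint_def'.mp hUV (U.sub_mem (hs x hx) (hs x' hx'))
      (V.sub_mem (ht y' hy') (ht y hy)) hdiff
  rw [sub_eq_zero] at hx_eq
  rw [hx_eq, sub_self, eq_comm, sub_eq_zero] at hdiff
  rw [hx_eq, hdiff]

def lineOfSlope {K : Type*} [Field K] (m : K) : Submodule K (K × K) where
  carrier := {p | p.2 = m * p.1}
  add_mem' {p q} hp hq := by simp_all [mul_add]
  zero_mem' := by simp
  smul_mem' c p hp := by simp_all [mul_left_comm]

theorem disjoint_lineOfSlope {K : Type*} [Field K] {m m' : K} (h : m ≠ m') :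
    Disjoint (lineOfSlope m).toAddSubgroup (lineOfSlope m').toAddSubgroup := by
  rw [AddSubgroup.disjoint_def]
  intro p hp hp'
  change p.2 = m * p.1 at hp
  change p.2 = m' * p.1 at hp'
  have h1 : p.1 = 0 := by
    have : (m - m') * p.1 = 0 := by rw [sub_mul, ← hp, ← hp', sub_self]
    exact (mul_eq_zero.mp this).resolve_left (sub_ne_zero.mpr h)
  exact Prod.ext h1 (by rw [hp, h1, mul_zero]; rfl)

theorem solymosi_observation_general (lam lam' : ℝ) (hlt : lam < lam')
    (P Q : Finset (ℝ × ℝ))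
    (hP : ∀ p ∈ P, 0 < p.1 ∧ p.2 = lam * p.1)
    (hQ : ∀ q ∈ Q, 0 < q.1 ∧ q.2 = lam' * q.1) :
    (Finset.image₂ (· + ·) P Q).card = P.card * Q.card ∧
      ∀ z ∈ Finset.image₂ (· + ·) P Q, lam < z.2 / z.1 ∧ z.2 / z.1 < lam' := by
  refine ⟨card_image₂_add_of_disjoint (disjoint_lineOfSlope hlt.ne)
    (fun p hp => (hP p hp).2) (fun q hq => (hQ q hq).2), ?_⟩
  simp only [mem_image₂]
  rintro _ ⟨p, hp, q, hq, rfl⟩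
  obtain ⟨hp₁, hp₂⟩ := hP p hp
  obtain ⟨hq₁, hq₂⟩ := hQ q hq
  have hp_slope : p.2 / p.1 = lam := by rw [hp₂, mul_div_cancel_right₀ _ hp₁.ne']
  have hq_slope : q.2 / q.1 = lam' := by rw [hq₂, mul_div_cancel_right₀ _ hq₁.ne']
  have h : p.2 / p.1 < q.2 / q.1 := by rwa [hp_slope, hq_slope]
  rw [← hp_slope, ← hq_slope]
  exact ⟨div_lt_add_div_add hp₁ hq₁ h, add_div_add_lt_div hp₁ hq₁ h⟩

theorem solymosi_observation (lam lam' : ℝ) (hlam : 0 < lam) (hlt : lam < lam')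
    (P Q : Finset (ℝ × ℝ))
    (hP : ∀ p ∈ P, 0 < p.1 ∧ p.2 = lam * p.1)
    (hQ : ∀ q ∈ Q, 0 < q.1 ∧ q.2 = lam' * q.1) :
    (Finset.image₂ (· + ·) P Q).card = P.card * Q.card ∧
      ∀ z ∈ Finset.image₂ (· + ·) P Q, lam < z.2 / z.1 ∧ z.2 / z.1 < lam' :=
  solymosi_observation_general lam lam' hlt P Q hP hQ
end

section
/- Let A be a finite set of positive reals, and let λ₁ < λ₂ < ... < λ_k be positive reals. Write A_λ = {x ∈ A : λx ∈ A}, and let 𝒜_λ = {(x, λx) : x ∈ A_λ} ⊂ A × A. Then |A/A + A|² ≥ ∑_{i=1}^{k-1} |A_{λ_i}| · |A_{λ_{i+1}}·A^{-1}|, where A_{λ_{i+1}}·A^{-1} = {b/a : b ∈ A_{λ_{i+1}}, a ∈ A}. -/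
open Finset

theorem consecutive_lines_lower_bound (A : Finset ℝ) (hA : ∀ a ∈ A, 0 < a)
    (k : ℕ) (l : ℕ → ℝ) (hpos : ∀ i < k, 0 < l i)
    (hmono : ∀ i j, i < j → j < k → l i < l j) :
    ∑ i ∈ Finset.range (k - 1),
        ((A.filter fun x => l i * x ∈ A).card : ℝ) *
          ((Finset.image₂ (· / ·) (A.filter fun x => l (i + 1) * x ∈ A) A).card : ℝ) ≤
      ((Finset.image₂ (· + ·) (Finset.image₂ (· / ·) A A) A).card : ℝ) ^ 2 := by
  set Q : Finset ℝ := Finset.image₂ (· + ·) (Finset.image₂ (· / ·) A A) A with hQ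
  set S : ℕ → Finset (ℝ × ℝ) := fun i =>
    Finset.image₂ (fun x r => (x + r, l i * x + l (i+1) * r))
      (A.filter fun x => l i * x ∈ A)
      (Finset.image₂ (· / ·) (A.filter fun x => l (i + 1) * x ∈ A) A) with hS
  -- cardinality of each S i
  have hcard : ∀ i ∈ Finset.range (k-1), (S i).card =
      (A.filter fun x => l i * x ∈ A).card *
      (Finset.image₂ (· / ·) (A.filter fun x => l (i + 1) * x ∈ A) A).card := by
    intro i hi
    simp only [mem_range] at hi
    have hlt : l i < l (i+1) := hmono i (i+1) (by omega) (by omega)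
    apply Finset.card_image₂
    intro x x' r r' h
    simp only [Prod.mk.injEq] at h
    obtain ⟨h1, h2⟩ := h
    have h3 : (l (i+1) - l i) * x = (l (i+1) - l i) * x' := by
      linear_combination l (i+1) * h1 - h2
    have hx : x = x' := mul_left_cancel₀ (sub_ne_zero.mpr (ne_of_gt hlt)) h3
    refine ⟨hx, ?_⟩
    subst hx; linarith
  -- key geometric fact about points in S i
  have hstrip : ∀ i, i < k - 1 → ∀ p ∈ S i,
      0 < p.1 ∧ l i * p.1 < p.2 ∧ p.2 < l (i+1) * p.1 := by
    intro i hi p hp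
    have hlt : l i < l (i+1) := hmono i (i+1) (by omega) (by omega)
    simp only [hS, Finset.mem_image₂] at hp
    obtain ⟨x, hx, r, hr, rfl⟩ := hp
    simp only [Finset.mem_filter] at hx
    obtain ⟨hxA, -⟩ := hx
    have hxpos : 0 < x := hA x hxA
    have hrpos : 0 < r := by
      obtain ⟨b, hb, a, ha, rfl⟩ := hr
      simp only [Finset.mem_filter] at hb
      exact div_pos (hA b hb.1) (hA a ha)
    refine ⟨by positivity, ?_, ?_⟩
    · show l i * (x + r) < l i * x + l (i+1) * r
      nlinarith
    · show l i * x + l (i+1) * r < l (i+1) * (x + r)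
      nlinarith
  -- S i ⊆ Q ×ˢ Q
  have hsub : ∀ i ∈ Finset.range (k-1), S i ⊆ Q ×ˢ Q := by
    intro i hi p hp
    simp only [hS, Finset.mem_image₂] at hp
    obtain ⟨x, hx, r, hr, rfl⟩ := hp
    simp only [Finset.mem_filter] at hx
    obtain ⟨hxA, hlxA⟩ := hx
    obtain ⟨b, hb, a, ha, rfl⟩ := hr
    simp only [Finset.mem_filter] at hb
    obtain ⟨hbA, hlbA⟩ := hb
    rw [Finset.mem_product]
    constructor
    · simp only [hQ, Finset.mem_image₂]
      exact ⟨b / a, ⟨b, hbA, a, ha, rfl⟩, x, hxA, by ring⟩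
    · simp only [hQ, Finset.mem_image₂]
      exact ⟨l (i + 1) * b / a, ⟨l (i + 1) * b, hlbA, a, ha, rfl⟩, l i * x, hlxA, by ring⟩
  -- pairwise disjoint
  have key : ∀ i j, i < k - 1 → j < k - 1 → i < j → Disjoint (S i) (S j) := by
    intro i j hi hj hlt
    rw [Finset.disjoint_left]
    intro p hpi hpj
    obtain ⟨hu, hi1, hi2⟩ := hstrip i hi p hpi
    obtain ⟨-, hj1, hj2⟩ := hstrip j hj p hpj
    have h1 : l (i+1) ≤ l j := by
      rcases eq_or_lt_of_le (by omega : i + 1 ≤ j) with h | h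
      · rw [h]
      · exact le_of_lt (hmono (i+1) j h (by omega))
    nlinarith
  have hdisj : (Finset.range (k-1) : Set ℕ).PairwiseDisjoint S := by
    intro i hi j hj hij
    simp only [Finset.coe_range, Set.mem_Iio] at hi hj
    rcases hij.lt_or_gt with h | h
    · exact key i j hi hj h
    · exact (key j i hj hi h).symm
  -- put it together
  have hsum : ∑ i ∈ Finset.range (k-1),
      (A.filter fun x => l i * x ∈ A).card *
      (Finset.image₂ (· / ·) (A.filter fun x => l (i + 1) * x ∈ A) A).card
      ≤ Q.card ^ 2 := by
    calc ∑ i ∈ Finset.range (k-1),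
        (A.filter fun x => l i * x ∈ A).card *
        (Finset.image₂ (· / ·) (A.filter fun x => l (i + 1) * x ∈ A) A).card
        = ∑ i ∈ Finset.range (k-1), (S i).card := by
          exact (Finset.sum_congr rfl hcard).symm
      _ = ((Finset.range (k-1)).biUnion S).card :=
          (Finset.card_biUnion (fun i hi j hj hij => hdisj (by simpa using hi)
            (by simpa using hj) hij)).symm
      _ ≤ (Q ×ˢ Q).card := Finset.card_le_card (by
          intro p hp
          simp only [Finset.mem_biUnion] at hp
          obtain ⟨i, hi, hpi⟩ := hp
          exact hsub i hi hpi)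
      _ = Q.card ^ 2 := by rw [Finset.card_product, sq]
  calc ∑ i ∈ Finset.range (k - 1),
      ((A.filter fun x => l i * x ∈ A).card : ℝ) *
        ((Finset.image₂ (· / ·) (A.filter fun x => l (i + 1) * x ∈ A) A).card : ℝ)
      = ((∑ i ∈ Finset.range (k-1),
          (A.filter fun x => l i * x ∈ A).card *
          (Finset.image₂ (· / ·) (A.filter fun x => l (i + 1) * x ∈ A) A).card : ℕ) : ℝ) := by
        push_cast; rfl
    _ ≤ ((Q.card ^ 2 : ℕ) : ℝ) := by exact_mod_cast hsum
    _ = (Q.card : ℝ) ^ 2 := by push_cast; rfl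
end

section
/- Let A be a finite set of positive reals with |A| ≥ 2 and suppose |A/A| ≥ |A|^{4/3 + 2/39}. Then |A/A + A| ≫ |A|^{3/2 + 1/26}. -/
/-!
Elekes–Nathanson–Ruzsa for `f x = x⁻¹`, applied to `X = A / A`: since `X⁻¹ = X`, both `X + A` and
`f(X) + A` are `A / A + A`.

For consecutive elements `x < x⁺` of `X`, the intervals `[x + b, x⁺ + b)` (for fixed `b`) are
disjoint, so on average they contain at most `|X + B| / |X|` points of `X + B`; likewise the
intervals `(f x⁺ + c, f x + c]` and `f(X) + C`. By Markov's inequality at least half of the triples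
`(x, b, c)` have both counts at most four times the average. Such a triple is determined by
`x + b`, `f x + c` and the two counts: the counts locate `x⁺ + b` and `f x⁺ + c`, hence the gap
`x⁺ - x` and the drop `f x - f x⁺`, and for strictly convex `f` the increment
`x ↦ f (x + d) - f x` is injective. Hence `|X|³ |B| |C| ≪ |X + B|² |f(X) + C|²`.
-/

open Finset
open scoped Pointwise

namespace Finset

variable {α : Type*} [LinearOrder α]

/-- The least element of `X` above `x`, or `x` itself if there is none. -/
noncomputable def next (X : Finset α) (x : α) : α :=
  if h : {y ∈ X | x < y}.Nonempty then {y ∈ X | x < y}.min' h else x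

variable {X : Finset α} {x y : α}

lemma lt_next (hy : y ∈ X) (hxy : x < y) : x < X.next x := by
  have h : {y ∈ X | x < y}.Nonempty := ⟨y, mem_filter.2 ⟨hy, hxy⟩⟩
  rw [next, dif_pos h]
  exact (mem_filter.1 (min'_mem _ h)).2

lemma next_mem_of_lt (h : x < X.next x) : X.next x ∈ X := by
  unfold next at h ⊢
  split_ifs at h ⊢ with hne
  exacts [(mem_filter.1 (min'_mem _ hne)).1, absurd h (lt_irrefl x)]

lemma next_le (hy : y ∈ X) (hxy : x < y) : X.next x ≤ y := by
  have h : {y ∈ X | x < y}.Nonempty := ⟨y, mem_filter.2 ⟨hy, hxy⟩⟩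
  rw [next, dif_pos h]
  exact min'_le _ _ (mem_filter.2 ⟨hy, hxy⟩)

lemma injOn_card_filter_Ico (S : Finset α) (u : α) :
    Set.InjOn (fun w ↦ #{t ∈ S | t ∈ Set.Ico u w}) {w | w ∈ S ∧ u ≤ w} := by
  refine StrictMonoOn.injOn fun w₁ hw₁ w₂ _ hw ↦ card_lt_card ?_
  refine (ssubset_iff_of_subset ?_).2 ⟨w₁, ?_, ?_⟩
  · exact monotone_filter_right _ fun _ _ h ↦ Set.Ico_subset_Ico_right hw.le h
  · simpa using ⟨hw₁.1, hw₁.2, hw⟩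
  · simp

lemma injOn_card_filter_Ioc (S : Finset α) (v : α) :
    Set.InjOn (fun w ↦ #{t ∈ S | t ∈ Set.Ioc w v}) {w | w ∈ S ∧ w ≤ v} := by
  refine StrictAntiOn.injOn fun w₁ _ w₂ hw₂ hw ↦ card_lt_card ?_
  refine (ssubset_iff_of_subset ?_).2 ⟨w₂, ?_, ?_⟩
  · exact monotone_filter_right _ fun _ _ h ↦ Set.Ioc_subset_Ioc_left hw.le h
  · simpa using ⟨hw₂.1, hw, hw₂.2⟩
  · simp

lemma sum_card_filter_mem_le_card {ι β : Type*} (I : Finset ι) (S : Finset β) (J : ι → Set β)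
    [∀ i, DecidablePred (· ∈ J i)]
    (hJ : (I : Set ι).PairwiseDisjoint J) : ∑ i ∈ I, #{t ∈ S | t ∈ J i} ≤ #S := by
  classical
  rw [← card_biUnion]
  · exact card_le_card (biUnion_subset.2 fun _ _ ↦ filter_subset _ _)
  · exact fun i hi j hj hij ↦ disjoint_filter_filter' _ _ (hJ hi hj hij)

lemma card_filter_lt_mul_le_sum {ι : Type*} (U : Finset ι) (F : ι → ℕ) (K : ℕ) :
    #{u ∈ U | K < F u} * (K + 1) ≤ ∑ u ∈ U, F u :=
  calc #{u ∈ U | K < F u} * (K + 1) = #{u ∈ U | K < F u} • (K + 1) := rfl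
    _ ≤ ∑ u ∈ U with K < F u, F u := card_nsmul_le_sum _ _ _ fun _ hu ↦ (mem_filter.1 hu).2
    _ ≤ ∑ u ∈ U, F u := sum_le_sum_of_subset (filter_subset _ _)

lemma mul_sum_card_filter_lt_le {ι β : Type*} (I : Finset ι) (B : Finset β) (F : ι → β → ℕ)
    {P : ℕ} (k : ℕ) (hF : ∀ b ∈ B, ∑ i ∈ I, F i b ≤ P) :
    k * ∑ i ∈ I, #{b ∈ B | k * P / #I < F i b} ≤ #I * #B := by
  rcases I.eq_empty_or_nonempty with rfl | hI
  · simp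
  set K := k * P / #I
  have hK : k * P < (K + 1) * #I := by
    rw [add_mul, one_mul]
    exact Nat.lt_div_mul_add (card_pos.2 hI)
  have hmarkov : (∑ i ∈ I, #{b ∈ B | K < F i b}) * (K + 1) ≤ #B * P :=
    calc _ = ∑ i ∈ I, #{b ∈ B | K < F i b} * (K + 1) := sum_mul _ _ _
      _ ≤ ∑ i ∈ I, ∑ b ∈ B, F i b := sum_le_sum fun i _ ↦ card_filter_lt_mul_le_sum _ _ _
      _ = ∑ b ∈ B, ∑ i ∈ I, F i b := sum_comm
      _ ≤ ∑ _b ∈ B, P := sum_le_sum hF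
      _ = #B * P := by rw [sum_const, smul_eq_mul]
  refine Nat.le_of_mul_le_mul_right ?_ (by positivity : 0 < K + 1)
  calc _ = k * ((∑ i ∈ I, #{b ∈ B | K < F i b}) * (K + 1)) := by ring
    _ ≤ k * (#B * P) := Nat.mul_le_mul_left k hmarkov
    _ = #B * (k * P) := by ring
    _ ≤ #B * ((K + 1) * #I) := Nat.mul_le_mul_left _ hK.le
    _ = _ := by ring

lemma card_mul_card_le_add_add {β : Type*} (B C : Finset β) (p q : β → ℕ) (K L : ℕ) :
    #B * #C ≤ #{b ∈ B | p b ≤ K} * #{c ∈ C | q c ≤ L} + #C * #{b ∈ B | K < p b} +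
      #B * #{c ∈ C | L < q c} := by
  have hB := card_filter_add_card_filter_not (s := B) (fun b ↦ p b ≤ K)
  have hC := card_filter_add_card_filter_not (s := C) (fun c ↦ q c ≤ L)
  simp only [not_le] at hB hC
  have := card_filter_le C (fun c ↦ q c ≤ L)
  nlinarith

end Finset

lemma StrictConvexOn.strictMonoOn_sub {s : Set ℝ} {f : ℝ → ℝ} (hf : StrictConvexOn ℝ s f) {d : ℝ}
    (hd : 0 < d) : StrictMonoOn (fun x ↦ f (x + d) - f x) {x | x ∈ s ∧ x + d ∈ s} := by
  rintro x ⟨hx, hxd⟩ y ⟨hy, hyd⟩ hxy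
  have h₁ := hf.secant_strict_mono hx hxd hyd (by linarith) (by linarith) (by linarith)
  have h₂ := hf.secant_strict_mono hyd hx hy (by linarith) (by linarith) hxy
  simp only [add_sub_cancel_left] at h₁
  rw [show y + d - x = -(x - (y + d)) by ring, div_neg, ← neg_div, neg_sub] at h₁
  rw [show y - (y + d) = -d by ring, div_neg, ← neg_div, neg_sub] at h₂
  have := h₁.trans h₂
  simpa using (div_lt_div_iff_of_pos_right hd).1 this

section ElekesNathansonRuzsa

variable {s : Set ℝ} {f : ℝ → ℝ} {S X B C I : Finset ℝ} {x y b c : ℝ}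

noncomputable def gapCount (S X : Finset ℝ) (x b : ℝ) : ℕ :=
  #{t ∈ S | t ∈ Set.Ico (x + b) (X.next x + b)}

noncomputable def imageGapCount (f : ℝ → ℝ) (S X : Finset ℝ) (x c : ℝ) : ℕ :=
  #{t ∈ S | t ∈ Set.Ioc (f (X.next x) + c) (f x + c)}

lemma sum_gapCount_le (hI : I ⊆ X) (b : ℝ) : ∑ x ∈ I, gapCount S X x b ≤ #S := by
  refine sum_card_filter_mem_le_card _ _ _ fun x hx y hy hxy ↦ ?_
  have key : ∀ x ∈ I, ∀ y ∈ I, x < y →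
      Disjoint (Set.Ico (x + b) (X.next x + b)) (Set.Ico (y + b) (X.next y + b)) :=
    fun x _ y hy hxy ↦ Set.disjoint_left.2 fun t ht ht' ↦ by
      linarith [ht.2, ht'.1, next_le (hI hy) hxy]
  rcases hxy.lt_or_gt with h | h
  exacts [key x hx y hy h, (key y hy x hx h).symm]

lemma sum_imageGapCount_le (hf : AntitoneOn f X) (hI : I ⊆ X) (c : ℝ) :
    ∑ x ∈ I, imageGapCount f S X x c ≤ #S := by
  refine sum_card_filter_mem_le_card _ _ _ fun x hx y hy hxy ↦ ?_
  have key : ∀ x ∈ I, ∀ y ∈ I, x < y →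
      Disjoint (Set.Ioc (f (X.next x) + c) (f x + c)) (Set.Ioc (f (X.next y) + c) (f y + c)) :=
    fun x hx y hy hxy ↦ Set.disjoint_left.2 fun t ht ht' ↦ by
      have hnext := next_mem_of_lt (lt_next (hI hy) hxy)
      linarith [ht.1, ht'.2, hf hnext (hI hy) (next_le (hI hy) hxy)]
  rcases hxy.lt_or_gt with h | h
  exacts [key x hx y hy h, (key y hy x hx h).symm]

lemma gapCount_pos (hx : x ∈ X) (hb : b ∈ B) (hxn : x < X.next x) : 0 < gapCount (X + B) X x b :=
  card_pos.2 ⟨x + b, mem_filter.2 ⟨add_mem_add hx hb, le_rfl, by linarith⟩⟩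

lemma imageGapCount_pos (hf : StrictAntiOn f X) (hx : x ∈ X) (hc : c ∈ C) (hxn : x < X.next x) :
    0 < imageGapCount f (X.image f + C) X x c := by
  have hfx : f (X.next x) < f x := hf hx (next_mem_of_lt hxn) hxn
  exact card_pos.2 ⟨f x + c, mem_filter.2 ⟨add_mem_add (mem_image_of_mem f hx) hc, by linarith, le_rfl⟩⟩

lemma eq_of_gapCount_eq_of_imageGapCount_eq (hf : StrictConvexOn ℝ s f) (hf' : StrictAntiOn f s)
    (hX : ↑X ⊆ s) (hx : x ∈ X) (hy : y ∈ X) (hxn : x < X.next x) (hyn : y < X.next y)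
    {b' c' : ℝ} (hb : b ∈ B) (hb' : b' ∈ B) (hc : c ∈ C) (hc' : c' ∈ C)
    (hsum : x + b = y + b') (hfsum : f x + c = f y + c')
    (hgap : gapCount (X + B) X x b = gapCount (X + B) X y b')
    (himgap : imageGapCount f (X.image f + C) X x c = imageGapCount f (X.image f + C) X y c') :
    x = y := by
  have hxn' := next_mem_of_lt hxn
  have hyn' := next_mem_of_lt hyn
  have hnext : X.next x + b = X.next y + b' := by
    refine injOn_card_filter_Ico (X + B) (x + b) ⟨add_mem_add hxn' hb, by linarith⟩
      ⟨add_mem_add hyn' hb', by linarith⟩ ?_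
    simpa only [gapCount, hsum] using hgap
  have hfnext : f (X.next x) + c = f (X.next y) + c' := by
    have hfx := hf' (hX hx) (hX hxn') hxn
    have hfy := hf' (hX hy) (hX hyn') hyn
    refine injOn_card_filter_Ioc (X.image f + C) (f x + c)
      ⟨add_mem_add (mem_image_of_mem f hxn') hc, by linarith⟩
      ⟨add_mem_add (mem_image_of_mem f hyn') hc', by linarith⟩ ?_
    simpa only [imageGapCount, hfsum] using himgap
  have hyd : y + (X.next x - x) = X.next y := by linarith
  refine (hf.strictMonoOn_sub (sub_pos.2 hxn)).injOn
    ⟨hX hx, by simpa using hX hxn'⟩ ⟨hX hy, hyd ▸ hX hyn'⟩ ?_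
  simp only [add_sub_cancel, hyd]
  linarith

lemma sum_card_good_mul_card_good_le (hf : StrictConvexOn ℝ s f) (hf' : StrictAntiOn f s)
    (hX : ↑X ⊆ s) (hI : ∀ x ∈ I, x ∈ X ∧ x < X.next x) (K₁ K₂ : ℕ) :
    ∑ x ∈ I, #{b ∈ B | gapCount (X + B) X x b ≤ K₁} *
        #{c ∈ C | imageGapCount f (X.image f + C) X x c ≤ K₂} ≤
      #(X + B) * #(X.image f + C) * K₁ * K₂ := by
  set good := I.sigma fun x ↦ {b ∈ B | gapCount (X + B) X x b ≤ K₁} ×ˢ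
    {c ∈ C | imageGapCount f (X.image f + C) X x c ≤ K₂}
  let encode : (Σ _ : ℝ, ℝ × ℝ) → ℝ × ℝ × ℕ × ℕ := fun p ↦
    (p.1 + p.2.1, f p.1 + p.2.2, gapCount (X + B) X p.1 p.2.1,
      imageGapCount f (X.image f + C) X p.1 p.2.2)
  have hmaps : Set.MapsTo encode good
      ((X + B) ×ˢ (X.image f + C) ×ˢ Icc 1 K₁ ×ˢ Icc 1 K₂ : Finset (ℝ × ℝ × ℕ × ℕ)) := by
    rintro ⟨x, b, c⟩ hp
    simp only [good, mem_coe, mem_sigma, mem_product, mem_filter] at hp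
    obtain ⟨hx, ⟨hb, hgb⟩, hc, hgc⟩ := hp
    simp only [encode, mem_coe, mem_product, mem_Icc]
    exact ⟨add_mem_add (hI x hx).1 hb, add_mem_add (mem_image_of_mem f (hI x hx).1) hc,
      ⟨gapCount_pos (hI x hx).1 hb (hI x hx).2, hgb⟩,
      ⟨imageGapCount_pos (hf'.mono hX) (hI x hx).1 hc (hI x hx).2, hgc⟩⟩
  have hinj : Set.InjOn encode good := by
    rintro ⟨x, b, c⟩ hp ⟨y, b', c'⟩ hq he
    simp only [good, mem_coe, mem_sigma, mem_product, mem_filter] at hp hq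
    simp only [encode, Prod.mk.injEq] at he
    obtain ⟨hsum, hfsum, hgap, himgap⟩ := he
    obtain rfl := eq_of_gapCount_eq_of_imageGapCount_eq hf hf' hX (hI x hp.1).1 (hI y hq.1).1
      (hI x hp.1).2 (hI y hq.1).2 hp.2.1.1 hq.2.1.1 hp.2.2.1 hq.2.2.1 hsum hfsum hgap himgap
    obtain rfl : b = b' := by linarith
    obtain rfl : c = c' := by linarith
    rfl
  calc _ = #good := by simp only [good, card_sigma, card_product]
    _ ≤ _ := card_le_card_of_injOn encode hmaps hinj
    _ = _ := by simp only [card_product, Nat.card_Icc, add_tsub_cancel_right, mul_assoc]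

theorem StrictConvexOn.elekes_nathanson_ruzsa (hf : StrictConvexOn ℝ s f) (hf' : StrictAntiOn f s)
    (hX : ↑X ⊆ s) (B C : Finset ℝ) :
    (#X - 1) ^ 3 * #B * #C ≤ 32 * #(X + B) ^ 2 * #(X.image f + C) ^ 2 := by
  rcases X.eq_empty_or_nonempty with rfl | hne
  · simp
  set I := X.erase (X.max' hne)
  have hIX : I ⊆ X := erase_subset _ _
  have hI : ∀ x ∈ I, x ∈ X ∧ x < X.next x := fun x hx ↦
    ⟨hIX hx, lt_next (max'_mem X hne) (lt_of_le_of_ne (le_max' X x (hIX hx)) (ne_of_mem_erase hx))⟩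
  rw [← card_erase_of_mem (max'_mem X hne)]
  set g := gapCount (X + B) X
  set h := imageGapCount f (X.image f + C) X
  set K₁ := 4 * #(X + B) / #I
  set K₂ := 4 * #(X.image f + C) / #I
  have hbad₁ : 4 * ∑ x ∈ I, #{b ∈ B | K₁ < g x b} ≤ #I * #B :=
    mul_sum_card_filter_lt_le I B g 4 fun b _ ↦ sum_gapCount_le hIX b
  have hbad₂ : 4 * ∑ x ∈ I, #{c ∈ C | K₂ < h x c} ≤ #I * #C :=
    mul_sum_card_filter_lt_le I C h 4 fun c _ ↦ sum_imageGapCount_le (hf'.mono hX).antitoneOn hIX c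
  have hgood : ∑ x ∈ I, #{b ∈ B | g x b ≤ K₁} * #{c ∈ C | h x c ≤ K₂} ≤
      #(X + B) * #(X.image f + C) * K₁ * K₂ :=
    sum_card_good_mul_card_good_le hf hf' hX hI K₁ K₂
  have hsplit : #I * #B * #C ≤ ∑ x ∈ I, #{b ∈ B | g x b ≤ K₁} * #{c ∈ C | h x c ≤ K₂} +
      #C * ∑ x ∈ I, #{b ∈ B | K₁ < g x b} + #B * ∑ x ∈ I, #{c ∈ C | K₂ < h x c} := by
    rw [mul_sum, mul_sum, ← sum_add_distrib, ← sum_add_distrib, mul_assoc, ← smul_eq_mul,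
      ← sum_const]
    exact sum_le_sum fun x _ ↦ card_mul_card_le_add_add B C (g x) (h x) K₁ K₂
  have hK₁ : K₁ * #I ≤ 4 * #(X + B) := Nat.div_mul_le_self _ _
  have hK₂ : K₂ * #I ≤ 4 * #(X.image f + C) := Nat.div_mul_le_self _ _
  have hhalf : #I * #B * #C ≤ 2 * ∑ x ∈ I, #{b ∈ B | g x b ≤ K₁} * #{c ∈ C | h x c ≤ K₂} := by
    nlinarith [Nat.mul_le_mul_left #C hbad₁, Nat.mul_le_mul_left #B hbad₂]
  calc #I ^ 3 * #B * #C = #I ^ 2 * (#I * #B * #C) := by ring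
    _ ≤ #I ^ 2 * (2 * (#(X + B) * #(X.image f + C) * K₁ * K₂)) :=
        Nat.mul_le_mul_left _ (hhalf.trans (Nat.mul_le_mul_left 2 hgood))
    _ = 2 * #(X + B) * #(X.image f + C) * (K₁ * #I) * (K₂ * #I) := by ring
    _ ≤ 2 * #(X + B) * #(X.image f + C) * (4 * #(X + B)) * (4 * #(X.image f + C)) := by gcongr
    _ = 32 * #(X + B) ^ 2 * #(X.image f + C) ^ 2 := by ring

end ElekesNathansonRuzsa

lemma strictConvexOn_inv : StrictConvexOn ℝ (Set.Ioi 0) fun x : ℝ ↦ x⁻¹ := by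
  simpa only [zpow_neg_one] using strictConvexOn_zpow (m := -1) (by norm_num) (by norm_num)

lemma card_div_pow_three_mul_card_sq_le {A : Finset ℝ} (hA : ∀ a ∈ A, 0 < a)
    (hD : 2 ≤ #(A / A)) : #(A / A) ^ 3 * #A ^ 2 ≤ 256 * #(A / A + A) ^ 4 := by
  have hpos : ↑(A / A) ⊆ Set.Ioi (0 : ℝ) := by
    intro x hx
    obtain ⟨a, ha, b, hb, rfl⟩ := mem_div.1 hx
    exact div_pos (hA a ha) (hA b hb)
  have henr := strictConvexOn_inv.elekes_nathanson_ruzsa inv_strictAntiOn hpos A A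
  rw [image_inv_eq_inv, inv_div] at henr
  calc #(A / A) ^ 3 * #A ^ 2 ≤ (2 * (#(A / A) - 1)) ^ 3 * #A ^ 2 := by gcongr; omega
    _ = 8 * ((#(A / A) - 1) ^ 3 * #A * #A) := by ring
    _ ≤ 8 * (32 * #(A / A + A) ^ 2 * #(A / A + A) ^ 2) := Nat.mul_le_mul_left 8 henr
    _ = 256 * #(A / A + A) ^ 4 := by ring

theorem large_ratio_set_case :
    ∃ c : ℝ, 0 < c ∧ ∀ A : Finset ℝ, (∀ a ∈ A, 0 < a) → 2 ≤ A.card →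
      (A.card : ℝ) ^ ((4 : ℝ) / 3 + 2 / 39) ≤ ((Finset.image₂ (· / ·) A A).card : ℝ) →
      c * (A.card : ℝ) ^ ((3 : ℝ) / 2 + 1 / 26) ≤
        ((Finset.image₂ (· + ·) (Finset.image₂ (· / ·) A A) A).card : ℝ) := by
  refine ⟨1 / 4, by norm_num, fun A hA hcard hratio ↦ ?_⟩
  change _ ≤ ((A / A).card : ℝ) at hratio
  change _ ≤ ((A / A + A).card : ℝ)
  have hn : (2 : ℝ) ≤ #A := by exact_mod_cast hcard
  have hD : 2 ≤ #(A / A) := by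
    exact_mod_cast hn.trans ((Real.self_le_rpow_of_one_le (by linarith) (by norm_num)).trans hratio)
  have hbound : ((#(A / A) : ℕ) : ℝ) ^ 3 * (#A : ℝ) ^ 2 ≤ 256 * (#(A / A + A) : ℝ) ^ 4 := by
    exact_mod_cast card_div_pow_three_mul_card_sq_le hA hD
  have hexp : ((#A : ℝ) ^ ((3 : ℝ) / 2 + 1 / 26)) ^ 4 =
      ((#A : ℝ) ^ ((4 : ℝ) / 3 + 2 / 39)) ^ 3 * (#A : ℝ) ^ 2 := by
    simp only [← Real.rpow_natCast, ← Real.rpow_mul (by linarith : (0 : ℝ) ≤ #A),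
      ← Real.rpow_add (by linarith : (0 : ℝ) < #A)]
    norm_num
  refine (pow_le_pow_iff_left₀ (by positivity) (by positivity) (by norm_num : 4 ≠ 0)).1 ?_
  calc (1 / 4 * (#A : ℝ) ^ ((3 : ℝ) / 2 + 1 / 26)) ^ 4
      = ((#A : ℝ) ^ ((4 : ℝ) / 3 + 2 / 39)) ^ 3 * (#A : ℝ) ^ 2 / 256 := by rw [mul_pow, hexp]; ring
    _ ≤ ((#(A / A) : ℕ) : ℝ) ^ 3 * (#A : ℝ) ^ 2 / 256 := by gcongr
    _ ≤ _ := by linarith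
end

section
/- Let A be a finite set of positive reals, λ₁ < λ₂ < ⋯ < λ_k positive reals with each |A_{λ_i}| ≥ τ, where A_λ = {x ∈ A : λx ∈ A}, and for each i fix a point p_i = (a_i, λ_i a_i) with a_i ∈ A_{λ_i}. Then for any i < j, the set 𝒜_{λ_i} + p_j·Δ(A^{-1}) := {(x + a_j/a, λ_i x + λ_j a_j/a) : x ∈ A_{λ_i}, a ∈ A} is a subset of (A/A + A) × (A/A + A), has cardinality at least τ|A|, and all its elements have slope strictly between λ_i and λ_j. -/
/-! Each point is the sum of a point `(x, λᵢ x)` of one line and a point `c/b · (1, λⱼ)` of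
another, so its slope is a weighted mean of `λᵢ` and `λⱼ`; since the lines are distinct, the
decomposition is unique, and `b ↦ c / b` is injective, so no two pairs `(x, b)` collide. -/

open Finset

section

variable {K : Type*} [Field K]

theorem injective2_add_div_of_ne {p q c : K} (hpq : p ≠ q) (hc : c ≠ 0) :
    Function.Injective2 fun x b : K => (x + c / b, p * x + q * c / b) := by
  intro x x' b b' h
  obtain ⟨h₁, h₂⟩ := Prod.mk.inj h
  have hx : (p - q) * (x - x') = 0 := by linear_combination h₂ - q * h₁
  obtain rfl : x = x' := sub_eq_zero.1 <| (mul_eq_zero.1 hx).resolve_left (sub_ne_zero.2 hpq)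
  have hb : c / b = c / b' := add_left_cancel h₁
  rw [div_eq_mul_inv, div_eq_mul_inv, mul_right_inj' hc, inv_inj] at hb
  exact ⟨rfl, hb⟩

theorem image₂_add_div_subset [DecidableEq K] (A : Finset K) {p q c : K} (hc : c ∈ A)
    (hqc : q * c ∈ A) :
    image₂ (fun x b => (x + c / b, p * x + q * c / b)) (A.filter fun x => p * x ∈ A) A ⊆
      image₂ (· + ·) (image₂ (· / ·) A A) A ×ˢ image₂ (· + ·) (image₂ (· / ·) A A) A := by
  intro z hz
  obtain ⟨x, hx, b, hb, rfl⟩ := mem_image₂.1 hz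
  obtain ⟨hxA, hpx⟩ := mem_filter.1 hx
  rw [mem_product, add_comm x, add_comm (p * x)]
  exact ⟨mem_image₂_of_mem (mem_image₂_of_mem hc hb) hxA,
    mem_image₂_of_mem (mem_image₂_of_mem hqc hb) hpx⟩

end

theorem div_add_mem_Ioo {K : Type*} [Field K] [LinearOrder K] [IsStrictOrderedRing K]
    {p q x y : K} (hpq : p < q) (hx : 0 < x) (hy : 0 < y) :
    (p * x + q * y) / (x + y) ∈ Set.Ioo p q := by
  have hxy : 0 < x + y := add_pos hx hy
  constructor
  · rw [lt_div_iff₀ hxy]; nlinarith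
  · rw [div_lt_iff₀ hxy]; nlinarith

theorem balog_pair_of_lines_general (A : Finset ℝ) (hA : ∀ x ∈ A, 0 < x)
    (k : ℕ) (l : ℕ → ℝ)
    (hmono : ∀ i j, i < j → j < k → l i < l j)
    (τ : ℝ) (hτ : ∀ i < k, τ ≤ ((A.filter fun x => l i * x ∈ A).card : ℝ))
    (a : ℕ → ℝ) (ha : ∀ i < k, a i ∈ A.filter fun x => l i * x ∈ A)
    (i j : ℕ) (hij : i < j) (hjk : j < k) :
    (Finset.image₂ (fun x b => (x + a j / b, l i * x + l j * a j / b))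
        (A.filter fun x => l i * x ∈ A) A ⊆
      (Finset.image₂ (· + ·) (Finset.image₂ (· / ·) A A) A) ×ˢ
        (Finset.image₂ (· + ·) (Finset.image₂ (· / ·) A A) A)) ∧
    τ * (A.card : ℝ) ≤
      ((Finset.image₂ (fun x b => (x + a j / b, l i * x + l j * a j / b))
        (A.filter fun x => l i * x ∈ A) A).card : ℝ) ∧
    ∀ z ∈ Finset.image₂ (fun x b => (x + a j / b, l i * x + l j * a j / b))
        (A.filter fun x => l i * x ∈ A) A,
      l i < z.2 / z.1 ∧ z.2 / z.1 < l j := by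
  have hlij : l i < l j := hmono i j hij hjk
  obtain ⟨haj, hlaj⟩ := mem_filter.1 (ha j hjk)
  refine ⟨image₂_add_div_subset A haj hlaj, ?_, ?_⟩
  · rw [card_image₂ (injective2_add_div_of_ne hlij.ne (hA _ haj).ne'), Nat.cast_mul]
    exact mul_le_mul_of_nonneg_right (hτ i (hij.trans hjk)) (Nat.cast_nonneg _)
  · intro z hz
    obtain ⟨x, hx, b, hb, rfl⟩ := mem_image₂.1 hz
    rw [mul_div_assoc]
    exact div_add_mem_Ioo hlij (hA _ (mem_filter.1 hx).1) (div_pos (hA _ haj) (hA _ hb))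

theorem balog_pair_of_lines (A : Finset ℝ) (hA : ∀ x ∈ A, 0 < x)
    (k : ℕ) (l : ℕ → ℝ) (hpos : ∀ i < k, 0 < l i)
    (hmono : ∀ i j, i < j → j < k → l i < l j)
    (τ : ℝ) (hτ : ∀ i < k, τ ≤ ((A.filter fun x => l i * x ∈ A).card : ℝ))
    (a : ℕ → ℝ) (ha : ∀ i < k, a i ∈ A.filter fun x => l i * x ∈ A)
    (i j : ℕ) (hij : i < j) (hjk : j < k) :
    (Finset.image₂ (fun x b => (x + a j / b, l i * x + l j * a j / b))
        (A.filter fun x => l i * x ∈ A) A ⊆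
      (Finset.image₂ (· + ·) (Finset.image₂ (· / ·) A A) A) ×ˢ
        (Finset.image₂ (· + ·) (Finset.image₂ (· / ·) A A) A)) ∧
    τ * (A.card : ℝ) ≤
      ((Finset.image₂ (fun x b => (x + a j / b, l i * x + l j * a j / b))
        (A.filter fun x => l i * x ∈ A) A).card : ℝ) ∧
    ∀ z ∈ Finset.image₂ (fun x b => (x + a j / b, l i * x + l j * a j / b))
        (A.filter fun x => l i * x ∈ A) A,
      l i < z.2 / z.1 ∧ z.2 / z.1 < l j :=
  balog_pair_of_lines_general A hA k l hmono τ hτ a ha i j hij hjk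
end
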